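/- A strongly connected directed multigraph on $n$ vertices has at most $2n - 2$ essential edges, where an edge is essential if its removal destroys strong connectivity. -/

import Mathlib

/-!
Fix a root `r`. Following shortest paths, every vertex `v ≠ r` has an out-edge that
strictly decreases the distance to `r`; these `n - 1` edges form an in-tree through which
every vertex reaches `r`. Applied to the reversed graph, the same gives an out-tree of
`n - 1` edges through which `r` reaches every vertex. An edge outside both trees can be
deleted without losing strong connectivity, so every essential edge lies in one of them.
-/

/-- A directed multigraph on vertex type `V` with edge type `E`. -/
structure Multidigraph (V E : Type*) where
  src : E → V
  tgt : E → V

/-- Reachability in `G` using only edges in the set `S`. -/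
def Multidigraph.Reach {V E : Type*} (G : Multidigraph V E) (S : Set E) (u v : V) : Prop :=
  Relation.ReflTransGen (fun a b => ∃ e ∈ S, G.src e = a ∧ G.tgt e = b) u v

/-- Strong connectivity of the subgraph of `G` with edge set `S`. -/
def Multidigraph.StronglyConnectedOn {V E : Type*} (G : Multidigraph V E) (S : Set E) : Prop :=
  ∀ u v : V, G.Reach S u v

def Multidigraph.indeg {V E : Type*} [Fintype E] [DecidableEq V]
    (G : Multidigraph V E) (v : V) : ℕ :=
  (Finset.univ.filter (fun e => G.tgt e = v)).card

def Multidigraph.outdeg {V E : Type*} [Fintype E] [DecidableEq V]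
    (G : Multidigraph V E) (v : V) : ℕ :=
  (Finset.univ.filter (fun e => G.src e = v)).card

namespace Relation

variable {α : Type*} {R : α → α → Prop} {r : α}

theorem exists_descending_rank_of_reflTransGen (h : ∀ a, ReflTransGen R a r) :
    ∃ d : α → ℕ, ∀ a, a ≠ r → ∃ b, R a b ∧ d b < d a := by
  classical
  have hchain : ∀ a, ∃ n, ∃ l : List α, l.length = n ∧ List.IsChain R (a :: l) ∧
      (a :: l).getLast (List.cons_ne_nil _ _) = r := fun a => by
    obtain ⟨l, hl⟩ := List.exists_isChain_cons_of_relationReflTransGen (h a)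
    exact ⟨l.length, l, rfl, hl⟩
  refine ⟨fun a => Nat.find (hchain a), fun a har => ?_⟩
  obtain ⟨l, hlen, hl, hlast⟩ := Nat.find_spec (hchain a)
  match l, hlen, hl, hlast with
  | [], _, _, hlast => exact absurd hlast har
  | b :: l, hlen, hl, hlast =>
    rw [List.isChain_cons_cons] at hl
    rw [List.getLast_cons_cons] at hlast
    refine ⟨b, hl.1, show Nat.find (hchain b) < Nat.find (hchain a) from ?_⟩
    have : Nat.find (hchain b) ≤ l.length := Nat.find_min' _ ⟨l, rfl, hl.2, hlast⟩
    simp only [List.length_cons] at hlen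
    omega

theorem reflTransGen_of_descending_rank (d : α → ℕ)
    (hd : ∀ a, a ≠ r → ∃ b, R a b ∧ d b < d a) (a : α) : ReflTransGen R a r := by
  induction h : d a using Nat.strong_induction_on generalizing a with
  | _ n ih =>
    by_cases har : a = r
    · exact har ▸ .refl
    · obtain ⟨b, hab, hlt⟩ := hd a har
      exact .head hab (ih _ (h ▸ hlt) b rfl)

end Relation

namespace Multidigraph

variable {V E : Type*} (G : Multidigraph V E)

def reverse : Multidigraph V E := ⟨G.tgt, G.src⟩

variable {G}

theorem Reach.mono {S T : Set E} (hST : S ⊆ T) {u v : V} (h : G.Reach S u v) :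
    G.Reach T u v :=
  Relation.ReflTransGen.mono (fun _ _ ⟨e, he, hsrc, htgt⟩ => ⟨e, hST he, hsrc, htgt⟩) _ _ h

theorem reach_reverse {S : Set E} {u v : V} : G.reverse.Reach S u v ↔ G.Reach S v u := by
  rw [Reach, ← Relation.reflTransGen_swap]
  exact ⟨Relation.ReflTransGen.mono (fun _ _ ⟨e, he, h₁, h₂⟩ => ⟨e, he, h₂, h₁⟩) _ _,
    Relation.ReflTransGen.mono (fun _ _ ⟨e, he, h₁, h₂⟩ => ⟨e, he, h₂, h₁⟩) _ _⟩

theorem exists_inTree [Fintype V] {r : V} (h : ∀ v, G.Reach Set.univ v r) :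
    ∃ T : Finset E, T.card ≤ Fintype.card V - 1 ∧ ∀ v, G.Reach T v r := by
  classical
  obtain ⟨d, hd⟩ := Relation.exists_descending_rank_of_reflTransGen h
  have hedge : ∀ a, a ≠ r → ∃ e, G.src e = a ∧ d (G.tgt e) < d a := fun a ha => by
    obtain ⟨_, ⟨e, -, hsrc, rfl⟩, hlt⟩ := hd a ha
    exact ⟨e, hsrc, hlt⟩
  choose next hsrc hlt using hedge
  refine ⟨Finset.univ.image fun v : {v // v ≠ r} => next v v.2, ?_, fun v => ?_⟩
  · calc _ ≤ Fintype.card {v // v ≠ r} := Finset.card_image_le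
      _ = Fintype.card V - 1 := by simp [Fintype.card_subtype_compl]
  · refine Relation.reflTransGen_of_descending_rank d
      (fun a ha => ⟨_, ⟨next a ha, ?_, hsrc a ha, rfl⟩, hlt a ha⟩) v
    simpa using ⟨a, ha, rfl⟩

theorem exists_outTree [Fintype V] {r : V} (h : ∀ v, G.Reach Set.univ r v) :
    ∃ T : Finset E, T.card ≤ Fintype.card V - 1 ∧ ∀ v, G.Reach T r v := by
  obtain ⟨T, hcard, hT⟩ := G.reverse.exists_inTree (r := r) fun v => reach_reverse.2 (h v)
  exact ⟨T, hcard, fun v => reach_reverse.1 (hT v)⟩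

theorem stronglyConnectedOn_of_reach_root {S : Set E} {r : V} (hin : ∀ v, G.Reach S v r)
    (hout : ∀ v, G.Reach S r v) : G.StronglyConnectedOn S :=
  fun u v => (hin u).trans (hout v)

end Multidigraph

theorem essential_edges_le_general {V E : Type*} [Fintype V]
    (G : Multidigraph V E)
    (hsc : G.StronglyConnectedOn Set.univ) :
    Nat.card {e : E // ¬ G.StronglyConnectedOn {e' | e' ≠ e}} ≤ 2 * Fintype.card V - 2 := by
  classical
  rcases isEmpty_or_nonempty V with _ | ⟨⟨r⟩⟩
  · simp [Multidigraph.StronglyConnectedOn]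
  obtain ⟨Tin, hin_card, hin⟩ := G.exists_inTree fun v => hsc v r
  obtain ⟨Tout, hout_card, hout⟩ := G.exists_outTree fun v => hsc r v
  have hessential : {e | ¬ G.StronglyConnectedOn {e' | e' ≠ e}} ⊆ ↑(Tin ∪ Tout) := by
    intro e he
    by_contra hnot
    have hsub : ↑(Tin ∪ Tout) ⊆ {e' | e' ≠ e} := fun e' he' hee => hnot (hee ▸ he')
    exact he <| Multidigraph.stronglyConnectedOn_of_reach_root
      (fun v => (hin v).mono (subset_trans (by simp) hsub))
      (fun v => (hout v).mono (subset_trans (by simp) hsub))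
  calc Nat.card {e : E // ¬ G.StronglyConnectedOn {e' | e' ≠ e}}
      ≤ Nat.card ↑(Tin ∪ Tout) := Nat.card_mono (Finset.finite_toSet _) hessential
    _ ≤ Tin.card + Tout.card := by
      rw [Nat.card_eq_fintype_card, Fintype.card_coe]
      exact Finset.card_union_le _ _
    _ ≤ 2 * Fintype.card V - 2 := by omega

/-- A strongly connected directed multigraph on `n` vertices has at most `2n - 2` essential
edges, where an edge is essential if its removal destroys strong connectivity. -/
theorem essential_edges_le {V E : Type*} [Fintype V] [Fintype E] [DecidableEq V]
    (G : Multidigraph V E)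
    (hsc : G.StronglyConnectedOn Set.univ) :
    Nat.card {e : E // ¬ G.StronglyConnectedOn {e' | e' ≠ e}} ≤ 2 * Fintype.card V - 2 :=
  essential_edges_le_general G hsc
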